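/- Let G be a group. If p: G × G → ℂ is a quasi-additive function (i.e., p(xy, z) = p(x, yz) + p(y, zx) for all x, y, z ∈ G), then the function q: G → ℂ defined by q(x) = p(x, x⁻¹) is a group homomorphism from G to the additive group ℂ, i.e., q(xy) = q(x) + q(y) for all x, y ∈ G. -/

import Mathlib

theorem quasiAdditive_diag_is_hom {G : Type*} [Group G] (p : G → G → ℂ)
    (hp : ∀ x y z : G, p (x * y) z = p x (y * z) + p y (z * x)) :
    ∀ x y : G, p (x * y) (x * y)⁻¹ = p x x⁻¹ + p y y⁻¹ := by
  intro x y
  rw [hp x y, show y * (x * y)⁻¹ = x⁻¹ by group, show (x * y)⁻¹ * x = y⁻¹ by group]
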